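/- arXiv:2409.06975 — 2 statements merged into one kernel-verified Lean document; each statement's English description precedes it below -/
import Mathlib

section
/- If an nr-nr-DFAwtl A is deterministic (|I| = 1 and |δ(q,a)| ≤ 1 for all q, a), then the constructed equivalent finite automaton B defined by δ_B(q,a) = {q} if a ∈ τ(q) and δ_B(q,a) = δ(q,a) otherwise is deterministic and satisfies L(B) = L(A). -/
/-- A nondeterministic finite automaton with translucent letters (NFAwtl). -/
structure NFAwtl (Q α : Type) where
  τ : Q → Set α
  I : Set Q
  F : Set Q
  δ : Q → α → Set Q
  tr : ∀ q a, a ∈ τ q → δ q a = ∅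

namespace NFAwtl

variable {Q α : Type}

/-- One computation step of an NFAwtl: delete the leftmost non-translucent letter
and change state (the head returns to the left end). -/
def Step (A : NFAwtl Q α) : Q × List α → Q × List α → Prop := fun c c' =>
  ∃ u a v, c.2 = u ++ a :: v ∧ (∀ x ∈ u, x ∈ A.τ c.1) ∧ a ∉ A.τ c.1 ∧
    c'.1 ∈ A.δ c.1 a ∧ c'.2 = u ++ v

/-- Acceptance: from some initial state, reach a configuration whose remaining
letters are all translucent for a final state. -/
def Accepts (A : NFAwtl Q α) (w : List α) : Prop :=
  ∃ q₀ ∈ A.I, ∃ q w', Relation.ReflTransGen A.Step (q₀, w) (q, w') ∧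
    (∀ x ∈ w', x ∈ A.τ q) ∧ q ∈ A.F

def lang (A : NFAwtl Q α) : Set (List α) := { w | A.Accepts w }

/-- A DFAwtl: single initial state and at most one transition per state/letter. -/
def Deterministic (A : NFAwtl Q α) : Prop :=
  (∃ q₀, A.I = {q₀}) ∧ ∀ q a, (A.δ q a).Subsingleton

end NFAwtl

/-- A repetitive NFAwtl (RNFAwtl): on the end-of-tape marker it may accept
(states in `Facc`) or change state via `δend` and continue. -/
structure RNFAwtl (Q α : Type) where
  τ : Q → Set α
  I : Set Q
  δ : Q → α → Set Q
  δend : Q → Set Q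
  Facc : Set Q
  tr : ∀ q a, a ∈ τ q → δ q a = ∅
  accEnd : ∀ q, q ∈ Facc → δend q = ∅

namespace RNFAwtl

variable {Q α : Type}

/-- One computation step of an RNFAwtl: either delete the leftmost
non-translucent letter, or, when all remaining letters are translucent,
change state via a `◁`-transition and continue. -/
def Step (A : RNFAwtl Q α) : Q × List α → Q × List α → Prop := fun c c' =>
  (∃ u a v, c.2 = u ++ a :: v ∧ (∀ x ∈ u, x ∈ A.τ c.1) ∧ a ∉ A.τ c.1 ∧
    c'.1 ∈ A.δ c.1 a ∧ c'.2 = u ++ v)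
  ∨ ((∀ x ∈ c.2, x ∈ A.τ c.1) ∧ c'.1 ∈ A.δend c.1 ∧ c'.2 = c.2)

def Accepts (A : RNFAwtl Q α) (w : List α) : Prop :=
  ∃ q₀ ∈ A.I, ∃ q w', Relation.ReflTransGen A.Step (q₀, w) (q, w') ∧
    (∀ x ∈ w', x ∈ A.τ q) ∧ q ∈ A.Facc

def lang (A : RNFAwtl Q α) : Set (List α) := { w | A.Accepts w }

/-- An RDFAwtl: single initial state and deterministic transitions. -/
def Deterministic (A : RNFAwtl Q α) : Prop :=
  (∃ q₀, A.I = {q₀}) ∧ (∀ q a, (A.δ q a).Subsingleton) ∧ ∀ q, (A.δend q).Subsingleton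

end RNFAwtl

/-- A non-returning repetitive NFAwtl (nr-NFAwtl): the head continues from the
position of the last deleted letter; on the end-of-tape marker it may change
state and return the head to the left end. -/
structure NrNFAwtl (Q α : Type) where
  τ : Q → Set α
  I : Set Q
  δ : Q → α → Set Q
  δend : Q → Set Q
  Facc : Set Q
  tr : ∀ q a, a ∈ τ q → δ q a = ∅
  accEnd : ∀ q, q ∈ Facc → δend q = ∅

namespace NrNFAwtl

variable {Q α : Type}

/-- Configurations are `(x, q, w)`: `x` is the already-skipped prefix, the head
is on the first letter of `w`. -/
def Step (A : NrNFAwtl Q α) :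
    List α × Q × List α → List α × Q × List α → Prop := fun c c' =>
  (∃ u a v, c.2.2 = u ++ a :: v ∧ (∀ x ∈ u, x ∈ A.τ c.2.1) ∧ a ∉ A.τ c.2.1 ∧
    c'.2.1 ∈ A.δ c.2.1 a ∧ c'.1 = c.1 ++ u ∧ c'.2.2 = v)
  ∨ ((∀ x ∈ c.2.2, x ∈ A.τ c.2.1) ∧ c'.2.1 ∈ A.δend c.2.1 ∧ c'.1 = [] ∧
    c'.2.2 = c.1 ++ c.2.2)

def Accepts (A : NrNFAwtl Q α) (w : List α) : Prop :=
  ∃ q₀ ∈ A.I, ∃ x q w', Relation.ReflTransGen A.Step ([], q₀, w) (x, q, w') ∧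
    (∀ y ∈ w', y ∈ A.τ q) ∧ q ∈ A.Facc

def lang (A : NrNFAwtl Q α) : Set (List α) := { w | A.Accepts w }

def Deterministic (A : NrNFAwtl Q α) : Prop :=
  (∃ q₀, A.I = {q₀}) ∧ (∀ q a, (A.δ q a).Subsingleton) ∧ ∀ q, (A.δend q).Subsingleton

end NrNFAwtl

/-- A non-repetitive non-returning NFAwtl (nr-nr-NFAwtl): non-returning, and it
must halt as soon as all remaining letters to the right are translucent. -/
structure NrnrNFAwtl (Q α : Type) where
  τ : Q → Set α
  I : Set Q
  F : Set Q
  δ : Q → α → Set Q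
  tr : ∀ q a, a ∈ τ q → δ q a = ∅

namespace NrnrNFAwtl

variable {Q α : Type}

def Step (A : NrnrNFAwtl Q α) :
    List α × Q × List α → List α × Q × List α → Prop := fun c c' =>
  ∃ u a v, c.2.2 = u ++ a :: v ∧ (∀ x ∈ u, x ∈ A.τ c.2.1) ∧ a ∉ A.τ c.2.1 ∧
    c'.2.1 ∈ A.δ c.2.1 a ∧ c'.1 = c.1 ++ u ∧ c'.2.2 = v

def Accepts (A : NrnrNFAwtl Q α) (w : List α) : Prop :=
  ∃ q₀ ∈ A.I, ∃ x q w', Relation.ReflTransGen A.Step ([], q₀, w) (x, q, w') ∧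
    (∀ y ∈ w', y ∈ A.τ q) ∧ q ∈ A.F

def lang (A : NrnrNFAwtl Q α) : Set (List α) := { w | A.Accepts w }

def Deterministic (A : NrnrNFAwtl Q α) : Prop :=
  (∃ q₀, A.I = {q₀}) ∧ ∀ q a, (A.δ q a).Subsingleton

end NrnrNFAwtl

/-- Language classes. -/
def NFAwtlLangs (α : Type) [Fintype α] : Set (Set (List α)) :=
  { L | ∃ (Q : Type) (_ : Fintype Q) (A : NFAwtl Q α), A.lang = L }

def DFAwtlLangs (α : Type) [Fintype α] : Set (Set (List α)) :=
  { L | ∃ (Q : Type) (_ : Fintype Q) (A : NFAwtl Q α), A.Deterministic ∧ A.lang = L }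

def RNFAwtlLangs (α : Type) [Fintype α] : Set (Set (List α)) :=
  { L | ∃ (Q : Type) (_ : Fintype Q) (A : RNFAwtl Q α), A.lang = L }

def RDFAwtlLangs (α : Type) [Fintype α] : Set (Set (List α)) :=
  { L | ∃ (Q : Type) (_ : Fintype Q) (A : RNFAwtl Q α), A.Deterministic ∧ A.lang = L }

def NrNFAwtlLangs (α : Type) [Fintype α] : Set (Set (List α)) :=
  { L | ∃ (Q : Type) (_ : Fintype Q) (A : NrNFAwtl Q α), A.lang = L }

def NrDFAwtlLangs (α : Type) [Fintype α] : Set (Set (List α)) :=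
  { L | ∃ (Q : Type) (_ : Fintype Q) (A : NrNFAwtl Q α), A.Deterministic ∧ A.lang = L }

def NrnrNFAwtlLangs (α : Type) [Fintype α] : Set (Set (List α)) :=
  { L | ∃ (Q : Type) (_ : Fintype Q) (A : NrnrNFAwtl Q α), A.lang = L }

def NrnrDFAwtlLangs (α : Type) [Fintype α] : Set (Set (List α)) :=
  { L | ∃ (Q : Type) (_ : Fintype Q) (A : NrnrNFAwtl Q α), A.Deterministic ∧ A.lang = L }

section Aux

namespace NrnrNFAwtl

variable {Q α : Type}

/-- The step relation, forgetting the skipped-prefix component. -/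
def Step' (A : NrnrNFAwtl Q α) : Q × List α → Q × List α → Prop := fun c c' =>
  ∃ u a v, c.2 = u ++ a :: v ∧ (∀ x ∈ u, x ∈ A.τ c.1) ∧ a ∉ A.τ c.1 ∧
    c'.1 ∈ A.δ c.1 a ∧ c'.2 = v

/-- Acceptance from a given state. -/
def Acc (A : NrnrNFAwtl Q α) (q : Q) (w : List α) : Prop :=
  ∃ q' w', Relation.ReflTransGen A.Step' (q, w) (q', w') ∧
    (∀ y ∈ w', y ∈ A.τ q') ∧ q' ∈ A.F

lemma step'_of_step (A : NrnrNFAwtl Q α) {c c' : List α × Q × List α}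
    (h : A.Step c c') : A.Step' c.2 c'.2 := by
  obtain ⟨u, a, v, h1, h2, h3, h4, h5, h6⟩ := h
  exact ⟨u, a, v, h1, h2, h3, h4, h6⟩

lemma rtg_step'_of_rtg (A : NrnrNFAwtl Q α) {c c' : List α × Q × List α}
    (h : Relation.ReflTransGen A.Step c c') :
    Relation.ReflTransGen A.Step' c.2 c'.2 := by
  induction h with
  | refl => exact .refl
  | tail _ h2 ih => exact ih.tail (A.step'_of_step h2)

lemma rtg_of_rtg_step' (A : NrnrNFAwtl Q α) {c c' : Q × List α}
    (h : Relation.ReflTransGen A.Step' c c') (x₀ : List α) :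
    ∃ x, Relation.ReflTransGen A.Step (x₀, c) (x, c') := by
  induction h with
  | refl => exact ⟨x₀, .refl⟩
  | tail _ h2 ih =>
    obtain ⟨x, hx⟩ := ih
    obtain ⟨u, a, v, h1, h2, h3, h4, h5⟩ := h2
    exact ⟨x ++ u, hx.tail ⟨u, a, v, h1, h2, h3, h4, rfl, h5⟩⟩

lemma accepts_iff_acc (A : NrnrNFAwtl Q α) (w : List α) :
    A.Accepts w ↔ ∃ q₀ ∈ A.I, A.Acc q₀ w := by
  constructor
  · rintro ⟨q₀, hq₀, x, q, w', hrun, htr, hF⟩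
    exact ⟨q₀, hq₀, q, w', A.rtg_step'_of_rtg hrun, htr, hF⟩
  · rintro ⟨q₀, hq₀, q, w', hrun, htr, hF⟩
    obtain ⟨x, hx⟩ := A.rtg_of_rtg_step' hrun []
    exact ⟨q₀, hq₀, x, q, w', hx, htr, hF⟩

lemma acc_cons_translucent (A : NrnrNFAwtl Q α) {q : Q} {a : α} {w : List α}
    (ha : a ∈ A.τ q) (h : A.Acc q w) : A.Acc q (a :: w) := by
  obtain ⟨q', w', hrun, htr, hF⟩ := h
  rcases hrun.cases_head with heq | ⟨c, h1, h2⟩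
  · rw [Prod.mk.injEq] at heq
    obtain ⟨rfl, rfl⟩ := heq
    refine ⟨q, a :: w, .refl, ?_, hF⟩
    intro y hy
    rcases List.mem_cons.mp hy with rfl | hy'
    · exact ha
    · exact htr _ hy'
  · obtain ⟨u, b, v, e1, e2, e3, e4, e5⟩ := h1
    refine ⟨q', w', Relation.ReflTransGen.head
      ⟨a :: u, b, v, by simp only [List.cons_append]; exact congrArg (a :: ·) e1,
        ?_, e3, e4, e5⟩ h2, htr, hF⟩
    intro x hx
    rcases List.mem_cons.mp hx with rfl | hx'
    · exact ha
    · exact e2 _ hx'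

lemma acc_cons_step (A : NrnrNFAwtl Q α) {q p : Q} {a : α} {w : List α}
    (ha : a ∉ A.τ q) (hp : p ∈ A.δ q a) (h : A.Acc p w) : A.Acc q (a :: w) := by
  obtain ⟨q', w', hrun, htr, hF⟩ := h
  exact ⟨q', w', Relation.ReflTransGen.head ⟨[], a, w, rfl, by simp, ha, hp, rfl⟩ hrun,
    htr, hF⟩

lemma acc_cons_elim (A : NrnrNFAwtl Q α) {q : Q} {a : α} {w : List α}
    (h : A.Acc q (a :: w)) :
    (a ∈ A.τ q ∧ A.Acc q w) ∨ (a ∉ A.τ q ∧ ∃ p ∈ A.δ q a, A.Acc p w) := by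
  obtain ⟨q', w', hrun, htr, hF⟩ := h
  rcases hrun.cases_head with heq | ⟨c, h1, h2⟩
  · rw [Prod.mk.injEq] at heq
    obtain ⟨rfl, rfl⟩ := heq
    exact Or.inl ⟨htr a (by simp), q, w, .refl, fun y hy => htr y (by simp [hy]), hF⟩
  · obtain ⟨u, b, v, e1, e2, e3, e4, e5⟩ := h1
    rcases u with _ | ⟨a', u'⟩
    · simp only [List.nil_append, List.cons.injEq] at e1
      obtain ⟨rfl, rfl⟩ := e1
      refine Or.inr ⟨e3, c.1, e4, q', w', ?_, htr, hF⟩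
      rwa [show c = (c.1, w) from Prod.ext rfl e5] at h2
    · simp only [List.cons_append, List.cons.injEq] at e1
      obtain ⟨rfl, rfl⟩ := e1
      have ha : a ∈ A.τ q := e2 a (by simp)
      refine Or.inl ⟨ha, q', w', Relation.ReflTransGen.head
        ⟨u', b, v, rfl, fun x hx => e2 x (by simp [hx]), e3, e4, e5⟩ h2, htr, hF⟩

end NrnrNFAwtl

lemma NFA.mem_evalFrom_iff {α Q : Type} (B : NFA α Q) (p : Q) (w : List α) (S : Set Q) :
    p ∈ B.evalFrom S w ↔ ∃ s ∈ S, p ∈ B.evalFrom {s} w := by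
  induction w generalizing S with
  | nil => simp
  | cons a w ih =>
    show p ∈ B.evalFrom (B.stepSet S a) w ↔ ∃ s ∈ S, p ∈ B.evalFrom (B.stepSet {s} a) w
    constructor
    · intro hp
      obtain ⟨t, ht, hp⟩ := (ih _).mp hp
      obtain ⟨s, hs, hts⟩ := (B.mem_stepSet ..).mp ht
      exact ⟨s, hs, (ih _).mpr ⟨t, (B.mem_stepSet ..).mpr ⟨s, rfl, hts⟩, hp⟩⟩
    · rintro ⟨s, hs, hp⟩
      obtain ⟨t, ht, hp⟩ := (ih _).mp hp
      obtain ⟨s', hs', hts⟩ := (B.mem_stepSet ..).mp ht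
      rw [Set.mem_singleton_iff] at hs'
      rw [hs'] at hts
      exact (ih _).mpr ⟨t, (B.mem_stepSet ..).mpr ⟨s, hs, hts⟩, hp⟩

/-- The NFA associated to an nr-nr-NFAwtl. -/
def NrnrNFAwtl.toNFA {Q α : Type} (A : NrnrNFAwtl Q α) : NFA α Q :=
  { step := fun q a => { p | (a ∈ A.τ q ∧ p = q) ∨ (a ∉ A.τ q ∧ p ∈ A.δ q a) },
    start := A.I,
    accept := A.F }

lemma NrnrNFAwtl.acc_iff_evalFrom {Q α : Type} (A : NrnrNFAwtl Q α) (w : List α) (q : Q) :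
    A.Acc q w ↔ ∃ p ∈ A.F, p ∈ A.toNFA.evalFrom {q} w := by
  induction w generalizing q with
  | nil =>
    simp only [NFA.evalFrom_nil, Set.mem_singleton_iff]
    constructor
    · rintro ⟨q', w', hrun, htr, hF⟩
      rcases hrun.cases_head with heq | ⟨c, h1, _⟩
      · rw [Prod.mk.injEq] at heq
        obtain ⟨rfl, rfl⟩ := heq
        exact ⟨q, hF, rfl⟩
      · obtain ⟨u, b, v, e1, -⟩ := h1
        simp at e1
    · rintro ⟨p, hF, rfl⟩
      exact ⟨p, [], .refl, by simp, hF⟩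
  | cons a w ih =>
    have hstep : A.toNFA.stepSet {q} a
        = { p | (a ∈ A.τ q ∧ p = q) ∨ (a ∉ A.τ q ∧ p ∈ A.δ q a) } := by
      ext p; rw [NFA.mem_stepSet]; simp [toNFA]
    show _ ↔ ∃ p ∈ A.F, p ∈ A.toNFA.evalFrom (A.toNFA.stepSet {q} a) w
    constructor
    · intro h
      rcases A.acc_cons_elim h with ⟨ha, hq⟩ | ⟨ha, p, hp, hacc⟩
      · obtain ⟨p', hF, hp'⟩ := (ih q).mp hq
        refine ⟨p', hF, (A.toNFA.mem_evalFrom_iff _ _ _).mpr ⟨q, ?_, hp'⟩⟩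
        rw [hstep]; exact Or.inl ⟨ha, rfl⟩
      · obtain ⟨p', hF, hp'⟩ := (ih p).mp hacc
        refine ⟨p', hF, (A.toNFA.mem_evalFrom_iff _ _ _).mpr ⟨p, ?_, hp'⟩⟩
        rw [hstep]; exact Or.inr ⟨ha, hp⟩
    · rintro ⟨p', hF, hp'⟩
      rw [A.toNFA.mem_evalFrom_iff] at hp'
      obtain ⟨t, ht, hp'⟩ := hp'
      rw [hstep] at ht
      rcases ht with ⟨ha, rfl⟩ | ⟨ha, ht⟩
      · exact A.acc_cons_translucent ha ((ih t).mpr ⟨p', hF, hp'⟩)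
      · exact A.acc_cons_step ha ht ((ih t).mpr ⟨p', hF, hp'⟩)

end Aux

/-- for a deterministic nr-nr-DFAwtl `A`, the NFA `B` with
`δ_B(q,a) = {q}` if `a ∈ τ(q)` and `δ_B(q,a) = δ(q,a)` otherwise is
deterministic and accepts the same language as `A`. -/
theorem nrnrDFAwtl_to_DFA (α : Type) [Fintype α] (Q : Type) [Fintype Q]
    (A : NrnrNFAwtl Q α) (hA : A.Deterministic) :
    let B : NFA α Q :=
      { step := fun q a => { p | (a ∈ A.τ q ∧ p = q) ∨ (a ∉ A.τ q ∧ p ∈ A.δ q a) },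
        start := A.I,
        accept := A.F }
    (∃ q₀, B.start = {q₀}) ∧ (∀ q a, (B.step q a).Subsingleton) ∧
      B.accepts = A.lang := by
  intro B
  refine ⟨hA.1, ?_, ?_⟩
  · intro q a p₁ hp₁ p₂ hp₂
    rcases hp₁ with ⟨h1, rfl⟩ | ⟨h1, hp₁⟩ <;> rcases hp₂ with ⟨h2, rfl⟩ | ⟨h2, hp₂⟩
    · rfl
    · exact absurd h1 h2
    · exact absurd h2 h1
    · exact hA.2 q a hp₁ hp₂
  · ext w
    show w ∈ A.toNFA.accepts ↔ A.Accepts w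
    rw [NFA.mem_accepts, A.accepts_iff_acc]
    constructor
    · rintro ⟨p, hF, hp⟩
      rw [A.toNFA.mem_evalFrom_iff] at hp
      obtain ⟨q₀, hq₀, hp⟩ := hp
      exact ⟨q₀, hq₀, (A.acc_iff_evalFrom w q₀).mpr ⟨p, hF, hp⟩⟩
    · rintro ⟨q₀, hq₀, hacc⟩
      obtain ⟨p, hF, hp⟩ := (A.acc_iff_evalFrom w q₀).mp hacc
      exact ⟨p, hF, (A.toNFA.mem_evalFrom_iff _ _ _).mpr ⟨q₀, hq₀, hp⟩⟩
end

section
/- From every RDFAwtl A one can effectively construct an equivalent RDFAwtl B such that in the first step of each computation, B reads and deletes the very first letter of the given input. -/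
namespace RNFAwtl

variable {Q α : Type} (M : RNFAwtl Q α)

def IsAccepting (c : Q × List α) : Prop :=
  (∀ x ∈ c.2, x ∈ M.τ c.1) ∧ c.1 ∈ M.Facc

def AcceptsFrom (c : Q × List α) : Prop :=
  ∃ c', Relation.ReflTransGen M.Step c c' ∧ M.IsAccepting c'

variable {M}

theorem accepts_iff_exists_acceptsFrom {w : List α} :
    M.Accepts w ↔ ∃ q₀ ∈ M.I, M.AcceptsFrom (q₀, w) := by
  simp only [Accepts, AcceptsFrom, IsAccepting, Prod.exists]

theorem AcceptsFrom.of_isAccepting {c : Q × List α} (h : M.IsAccepting c) :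
    M.AcceptsFrom c :=
  ⟨c, .refl, h⟩

theorem AcceptsFrom.head {c c' : Q × List α} (h : M.Step c c') (h' : M.AcceptsFrom c') :
    M.AcceptsFrom c :=
  let ⟨d, hr, hd⟩ := h'
  ⟨d, hr.head h, hd⟩

theorem AcceptsFrom.of_reflTransGen {c c' : Q × List α}
    (h : Relation.ReflTransGen M.Step c c') (h' : M.AcceptsFrom c') : M.AcceptsFrom c :=
  let ⟨d, hr, hd⟩ := h'
  ⟨d, h.trans hr, hd⟩

theorem step_cons_iff_of_not_mem {q : Q} {a : α} {t : List α} {c' : Q × List α}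
    (ha : a ∉ M.τ q) : M.Step (q, a :: t) c' ↔ ∃ q' ∈ M.δ q a, c' = (q', t) := by
  constructor
  · rintro (⟨_ | ⟨x, u⟩, b, v, he, hu, hb, hq', ht⟩ | ⟨hall, -, -⟩)
    · obtain ⟨rfl, rfl⟩ := List.cons.inj he
      exact ⟨c'.1, hq', Prod.ext rfl ht⟩
    · obtain ⟨rfl, -⟩ := List.cons.inj he
      exact absurd (hu _ List.mem_cons_self) ha
    · exact absurd (hall a List.mem_cons_self) ha
  · rintro ⟨q', hq', rfl⟩
    exact .inl ⟨[], a, t, rfl, by simp, ha, hq', rfl⟩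

theorem AcceptsFrom.exists_of_cons_not_mem {q : Q} {a : α} {t : List α} (ha : a ∉ M.τ q)
    (h : M.AcceptsFrom (q, a :: t)) : ∃ q' ∈ M.δ q a, M.AcceptsFrom (q', t) := by
  obtain ⟨d, hr, hd⟩ := h
  rcases hr.cases_head with rfl | ⟨c, hs, hr⟩
  · exact absurd (hd.1 a List.mem_cons_self) ha
  · obtain ⟨q', hq', rfl⟩ := (step_cons_iff_of_not_mem ha).1 hs
    exact ⟨q', hq', d, hr, hd⟩

theorem Step.append_translucent {q q' : Q} {u t t' : List α} (hu : ∀ x ∈ u, x ∈ M.τ q)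
    (h : M.Step (q, t) (q', t')) : M.Step (q, u ++ t) (q', u ++ t') := by
  rcases h with ⟨u₀, b, v, rfl, hu₀, hb, hq', rfl⟩ | ⟨hall, hq', rfl⟩
  · refine .inl ⟨u ++ u₀, b, v, by simp, ?_, hb, hq', by simp⟩
    simpa only [List.mem_append, or_imp, forall_and] using ⟨hu, hu₀⟩
  · refine .inr ⟨?_, hq', rfl⟩
    simpa only [List.mem_append, or_imp, forall_and] using ⟨hu, hall⟩

theorem Step.of_append_translucent {q : Q} {u t : List α} {c' : Q × List α}
    (hu : ∀ x ∈ u, x ∈ M.τ q) (h : M.Step (q, u ++ t) c') :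
    ∃ q' t', c' = (q', u ++ t') ∧ M.Step (q, t) (q', t') := by
  rcases h with ⟨u₀, b, v, he, hu₀, hb, hq', ht⟩ | ⟨hall, hq', ht⟩
  · -- `b` is not translucent, so it lies beyond the translucent prefix `u`
    obtain ⟨r, rfl, rfl⟩ : ∃ r, u₀ = u ++ r ∧ t = r ++ b :: v := by
      rcases List.append_eq_append_iff.1 he with h | ⟨_ | ⟨y, r⟩, rfl, hr⟩
      · exact h
      · exact ⟨[], by simp, by simpa using hr.symm⟩
      · obtain ⟨rfl, -⟩ := List.cons.inj hr
        exact absurd (hu b (by simp)) hb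
    refine ⟨c'.1, r ++ v, Prod.ext rfl (by simpa using ht), .inl ⟨r, b, v, rfl, ?_, hb, hq', rfl⟩⟩
    exact fun x hx => hu₀ x (List.mem_append_right u hx)
  · exact ⟨c'.1, t, Prod.ext rfl ht,
      .inr ⟨fun x hx => hall x (List.mem_append_right u hx), hq', rfl⟩⟩

theorem step_iff_of_simulates {P : Type} {N : RNFAwtl P α} {p : P} {q : Q} (f : Q → Set P)
    (hτ : N.τ p = M.τ q) (hδ : ∀ b, N.δ p b = {p' | ∃ q' ∈ M.δ q b, p' ∈ f q'})
    (hend : N.δend p = {p' | ∃ q' ∈ M.δend q, p' ∈ f q'}) {t t' : List α} {p' : P} :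
    N.Step (p, t) (p', t') ↔ ∃ q', M.Step (q, t) (q', t') ∧ p' ∈ f q' := by
  simp only [Step, hτ, hδ, hend, Set.mem_ofPred_eq]
  constructor
  · rintro (⟨u, b, v, he, hu, hb, ⟨q', hq', hp'⟩, ht⟩ | ⟨hall, ⟨q', hq', hp'⟩, ht⟩)
    · exact ⟨q', .inl ⟨u, b, v, he, hu, hb, hq', ht⟩, hp'⟩
    · exact ⟨q', .inr ⟨hall, hq', ht⟩, hp'⟩
  · rintro ⟨q', ⟨u, b, v, he, hu, hb, hq', ht⟩ | ⟨hall, hq', ht⟩, hp'⟩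
    · exact .inl ⟨u, b, v, he, hu, hb, ⟨q', hq', hp'⟩, ht⟩
    · exact .inr ⟨hall, ⟨q', hq', hp'⟩, ht⟩

end RNFAwtl

/-- States of the automaton that deletes the first letter at once: `run q (some a)` means that
the simulated automaton is in state `q` and has not yet consumed the already deleted letter `a`. -/
inductive BufState (Q α : Type)
  | start
  | run (q : Q) (buf : Option α)

instance {Q α : Type} [Fintype Q] [Fintype α] : Fintype (BufState Q α) :=
  Fintype.ofEquiv (Option (Q × Option α))
    { toFun := fun | none => .start | some (q, buf) => .run q buf
      invFun := fun | .start => none | .run q buf => some (q, buf)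
      left_inv := by rintro (_ | ⟨_, _⟩) <;> rfl
      right_inv := by rintro (_ | ⟨_, _⟩) <;> rfl }

namespace BufState

variable {Q α : Type}

def unbuffer (q₀ : Q) : BufState Q α × List α → Q × List α
  | (start, t) => (q₀, t)
  | (run q buf, t) => (q, buf.toList ++ t)

end BufState

namespace RNFAwtl

open BufState

variable {Q α : Type} (A : RNFAwtl Q α)

/-- The states entered when `A` reaches `q` with buffer `buf`: a buffered letter that is
not translucent for `q` is the one `A` deletes next, so that step is taken at once. -/
def settle : Option α → Q → Set (BufState Q α)
  | none, q => {run q none}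
  | some a, q => {s | (a ∈ A.τ q ∧ s = run q (some a)) ∨
      (a ∉ A.τ q ∧ ∃ q' ∈ A.δ q a, s = run q' none)}

def bufferFirst (q₀ : Q) : RNFAwtl (BufState Q α) α where
  τ
    | start => ∅
    | run q _ => A.τ q
  I := {start}
  δ
    | start, b => A.settle (some b) q₀
    | run q buf, b => {s | ∃ q' ∈ A.δ q b, s ∈ A.settle buf q'}
  δend
    | start => {s | ∃ q' ∈ A.δend q₀, s ∈ A.settle none q'}
    | run q buf => {s | ∃ q' ∈ A.δend q, s ∈ A.settle buf q'}
  Facc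
    | start => q₀ ∈ A.Facc
    | run q _ => q ∈ A.Facc
  tr := by
    rintro (_ | ⟨q, buf⟩) b hb
    · exact absurd hb (Set.notMem_empty b)
    · simp [A.tr q b hb]
  accEnd := by
    rintro (_ | ⟨q, buf⟩) hq <;> simp [A.accEnd _ hq]

def BufTranslucent : BufState Q α → Prop
  | start => True
  | run q buf => ∀ a ∈ buf, a ∈ A.τ q

variable {A}

theorem subsingleton_settle (hδ : ∀ q a, (A.δ q a).Subsingleton) (buf : Option α) (q : Q) :
    (A.settle buf q).Subsingleton := by
  cases buf with
  | none => exact Set.subsingleton_singleton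
  | some a =>
    rintro _ (⟨ha, rfl⟩ | ⟨ha, q₁, hq₁, rfl⟩) _ (⟨ha', rfl⟩ | ⟨ha', q₂, hq₂, rfl⟩)
    · rfl
    · exact absurd ha ha'
    · exact absurd ha' ha
    · rw [hδ q a hq₁ hq₂]

theorem subsingleton_bind_settle (hδ : ∀ q a, (A.δ q a).Subsingleton) {S : Set Q}
    (hS : S.Subsingleton) (buf : Option α) :
    {s | ∃ q ∈ S, s ∈ A.settle buf q}.Subsingleton := by
  rintro s₁ ⟨q₁, hq₁, hs₁⟩ s₂ ⟨q₂, hq₂, hs₂⟩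
  obtain rfl := hS hq₁ hq₂
  exact subsingleton_settle hδ buf q₁ hs₁ hs₂

theorem deterministic_bufferFirst (q₀ : Q) (hδ : ∀ q a, (A.δ q a).Subsingleton)
    (hend : ∀ q, (A.δend q).Subsingleton) : (A.bufferFirst q₀).Deterministic := by
  refine ⟨⟨start, rfl⟩, ?_, ?_⟩
  · rintro (_ | ⟨q, buf⟩) b
    · exact subsingleton_settle hδ (some b) q₀
    · exact subsingleton_bind_settle hδ (hδ q b) buf
  · rintro (_ | ⟨q, buf⟩)
    · exact subsingleton_bind_settle hδ (hend q₀) none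
    · exact subsingleton_bind_settle hδ (hend q) buf

variable {q₀ : Q}

theorem bufferFirst_step_run_iff {q : Q} {buf : Option α} {t t' : List α}
    {s : BufState Q α} :
    (A.bufferFirst q₀).Step (run q buf, t) (s, t') ↔
      ∃ q', A.Step (q, t) (q', t') ∧ s ∈ A.settle buf q' :=
  step_iff_of_simulates (A.settle buf) rfl (fun _ => rfl) rfl

theorem bufTranslucent_and_reflTransGen_of_mem_settle {buf : Option α} {q : Q} {s : BufState Q α}
    (hs : s ∈ A.settle buf q) (t : List α) :
    A.BufTranslucent s ∧
      Relation.ReflTransGen A.Step (q, buf.toList ++ t) (unbuffer q₀ (s, t)) := by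
  cases buf with
  | none =>
    obtain rfl := hs
    exact ⟨fun _ => nofun, .refl⟩
  | some a =>
    rcases hs with ⟨ha, rfl⟩ | ⟨ha, q', hq', rfl⟩
    · exact ⟨fun _ h => Option.some_inj.1 h ▸ ha, .refl⟩
    · exact ⟨fun _ => nofun, .single ((step_cons_iff_of_not_mem ha).2 ⟨q', hq', rfl⟩)⟩

theorem bufferFirst_step_start_iff {t t' : List α} {s : BufState Q α} :
    (A.bufferFirst q₀).Step (start, t) (s, t') ↔
      (∃ b, t = b :: t' ∧ s ∈ A.settle (some b) q₀) ∨
        (t = [] ∧ t' = [] ∧ ∃ q' ∈ A.δend q₀, s = run q' none) := by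
  constructor
  · -- nothing is translucent for `start`
    rintro (⟨_ | ⟨x, u⟩, b, v, rfl, hu, -, hs, rfl⟩ | ⟨hall, ⟨q', hq', rfl⟩, rfl⟩)
    · exact .inl ⟨b, rfl, hs⟩
    · exact absurd (hu x List.mem_cons_self) (Set.notMem_empty x)
    · obtain rfl := List.eq_nil_iff_forall_not_mem.2 fun x hx => hall x hx
      exact .inr ⟨rfl, rfl, q', hq', rfl⟩
  · rintro (⟨b, rfl, hs⟩ | ⟨rfl, rfl, q', hq', rfl⟩)
    · exact .inl ⟨[], b, t', rfl, by simp, Set.notMem_empty b, hs, rfl⟩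
    · exact .inr ⟨by simp, ⟨q', hq', rfl⟩, rfl⟩

theorem bufferFirst_step_sound {c c' : BufState Q α × List α}
    (h : (A.bufferFirst q₀).Step c c') (hc : A.BufTranslucent c.1) :
    A.BufTranslucent c'.1 ∧ Relation.ReflTransGen A.Step (unbuffer q₀ c) (unbuffer q₀ c') := by
  obtain ⟨_ | ⟨q, buf⟩, t⟩ := c <;> obtain ⟨s, t'⟩ := c'
  · rcases bufferFirst_step_start_iff.1 h with ⟨b, rfl, hs⟩ | ⟨rfl, rfl, q', hq', rfl⟩
    · exact bufTranslucent_and_reflTransGen_of_mem_settle hs t'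
    · exact ⟨fun _ => nofun, .single (.inr ⟨fun _ => nofun, hq', rfl⟩)⟩
  · obtain ⟨q', hstep, hs⟩ := bufferFirst_step_run_iff.1 h
    obtain ⟨hbuf, hr⟩ := bufTranslucent_and_reflTransGen_of_mem_settle (q₀ := q₀) hs t'
    exact ⟨hbuf, .head (hstep.append_translucent fun a ha => hc a (Option.mem_toList.1 ha)) hr⟩

theorem isAccepting_unbuffer {c : BufState Q α × List α}
    (h : (A.bufferFirst q₀).IsAccepting c) (hc : A.BufTranslucent c.1) :
    A.IsAccepting (unbuffer q₀ c) := by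
  obtain ⟨_ | ⟨q, buf⟩, t⟩ := c
  · exact ⟨fun x hx => absurd (h.1 x hx) (Set.notMem_empty x), h.2⟩
  · refine ⟨fun x hx => ?_, h.2⟩
    rcases List.mem_append.1 hx with hx | hx
    · exact hc x (Option.mem_toList.1 hx)
    · exact h.1 x hx

theorem acceptsFrom_unbuffer {c : BufState Q α × List α}
    (h : (A.bufferFirst q₀).AcceptsFrom c) (hc : A.BufTranslucent c.1) :
    A.AcceptsFrom (unbuffer q₀ c) := by
  obtain ⟨d, hr, hd⟩ := h
  induction hr using Relation.ReflTransGen.head_induction_on with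
  | refl => exact .of_isAccepting (isAccepting_unbuffer hd hc)
  | head hs _ ih =>
    obtain ⟨hbuf, hr⟩ := bufferFirst_step_sound hs hc
    exact .of_reflTransGen hr (ih hbuf)

theorem exists_mem_settle_acceptsFrom {buf : Option α} {q : Q} {t : List α}
    (h : ∀ buf' t', A.BufTranslucent (run q buf') → buf.toList ++ t = buf'.toList ++ t' →
      (A.bufferFirst q₀).AcceptsFrom (run q buf', t')) :
    ∃ s ∈ A.settle buf q, (A.bufferFirst q₀).AcceptsFrom (s, t) := by
  cases buf with
  | none => exact ⟨run q none, rfl, h none t nofun rfl⟩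
  | some a =>
    by_cases ha : a ∈ A.τ q
    · exact ⟨run q (some a), .inl ⟨ha, rfl⟩,
        h (some a) t (fun _ hb => Option.some_inj.1 hb ▸ ha) rfl⟩
    · -- `A` must delete `a` next; replay that deletion from the unbuffered configuration
      have ha' : a ∉ (A.bufferFirst q₀).τ (run q none) := ha
      obtain ⟨_, ⟨q', hq', rfl⟩, hacc⟩ := (h none (a :: t) nofun rfl).exists_of_cons_not_mem ha'
      exact ⟨run q' none, .inr ⟨ha, q', hq', rfl⟩, hacc⟩

theorem acceptsFrom_run_of_reflTransGen {x y : Q × List α} (hy : A.IsAccepting y)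
    (h : Relation.ReflTransGen A.Step x y) :
    ∀ buf t, A.BufTranslucent (run x.1 buf) → x.2 = buf.toList ++ t →
      (A.bufferFirst q₀).AcceptsFrom (run x.1 buf, t) := by
  induction h using Relation.ReflTransGen.head_induction_on with
  | refl =>
    intro buf t _ hy₂
    exact .of_isAccepting ⟨fun x hx => hy.1 x (hy₂ ▸ List.mem_append_right _ hx), hy.2⟩
  | @head x x₁ hstep _ ih =>
    obtain ⟨q, _⟩ := x
    rintro buf t hbuf rfl
    obtain ⟨q', t', rfl, hstep'⟩ :=
      hstep.of_append_translucent fun a ha => hbuf a (Option.mem_toList.1 ha)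
    obtain ⟨s, hs, hacc⟩ := exists_mem_settle_acceptsFrom ih
    exact hacc.head (bufferFirst_step_run_iff.2 ⟨q', hstep', hs⟩)

theorem acceptsFrom_run {q : Q} {buf : Option α} {t : List α} (hbuf : A.BufTranslucent (run q buf))
    (h : A.AcceptsFrom (q, buf.toList ++ t)) : (A.bufferFirst q₀).AcceptsFrom (run q buf, t) :=
  let ⟨_, hr, hy⟩ := h
  acceptsFrom_run_of_reflTransGen hy hr buf t hbuf rfl

theorem acceptsFrom_start {w : List α} (h : A.AcceptsFrom (q₀, w)) :
    (A.bufferFirst q₀).AcceptsFrom (start, w) := by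
  cases w with
  | nil =>
    obtain ⟨y, hr, hy⟩ := h
    rcases hr.cases_head with rfl | ⟨⟨q', t'⟩, hs, hr⟩
    · exact .of_isAccepting ⟨nofun, hy.2⟩
    · rcases hs with ⟨u, b, v, he, -⟩ | ⟨-, hq', rfl⟩
      · simp at he
      · exact (acceptsFrom_run (buf := none) nofun ⟨y, hr, hy⟩).head
          (bufferFirst_step_start_iff.2 (.inr ⟨rfl, rfl, q', hq', rfl⟩))
  | cons b v =>
    obtain ⟨s, hs, hacc⟩ := exists_mem_settle_acceptsFrom (q₀ := q₀) (buf := some b) (t := v)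
      fun _ _ hbuf heq => acceptsFrom_run hbuf (by rw [← heq]; exact h)
    exact hacc.head (bufferFirst_step_start_iff.2 (.inl ⟨b, rfl, hs⟩))

theorem lang_bufferFirst (hI : A.I = {q₀}) : (A.bufferFirst q₀).lang = A.lang := by
  ext w
  change (A.bufferFirst q₀).Accepts w ↔ A.Accepts w
  rw [accepts_iff_exists_acceptsFrom, accepts_iff_exists_acceptsFrom, hI]
  simp only [bufferFirst, Set.mem_singleton_iff, exists_eq_left]
  exact ⟨fun h => acceptsFrom_unbuffer h trivial, acceptsFrom_start⟩

end RNFAwtl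

/-- every RDFAwtl is equivalent to an RDFAwtl that reads and
deletes the very first letter of the input in the first step of each
computation (no letter is translucent for its initial state). -/
theorem RDFAwtl_reads_first_letter (α : Type) [Fintype α] (Q : Type) [Fintype Q]
    (A : RNFAwtl Q α) (hA : A.Deterministic) :
    ∃ (Q' : Type) (_ : Fintype Q') (B : RNFAwtl Q' α),
      B.Deterministic ∧ B.lang = A.lang ∧ ∀ q₀ ∈ B.I, B.τ q₀ = ∅ := by
  obtain ⟨⟨q₀, hI⟩, hδ, hend⟩ := hA
  refine ⟨BufState Q α, inferInstance, A.bufferFirst q₀,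
    RNFAwtl.deterministic_bufferFirst q₀ hδ hend, RNFAwtl.lang_bufferFirst hI, ?_⟩
  rintro _ rfl
  rfl
end
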